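/- Let η(z) = γ·z^{(γ-1)/γ}·α·(1-p+pz)·e^{-z} be the reparametrized RTGLE density with β = 0. If 0 < γ < 1/2 and p ∈ [0,1], then d/dz[log η(z)] = (1 - 1/γ)/z + p/(1-p+pz) - 1 < 0 for all z > 0, hence η is strictly decreasing on (0,∞). -/

import Mathlib

open Real Set

/-! Since `p z ≤ 1 - p + p z`, the term `p/(1 - p + p z)` is at most `1/z`, and `1 - 1/γ < -1`,
so the log-derivative is below `-1`. The density is positive and its derivative is the density
times the log-derivative, so it is strictly decreasing. -/

lemma one_sub_add_mul_pos {p z : ℝ} (hp0 : 0 ≤ p) (hp1 : p ≤ 1) (hz : 0 < z) :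
    0 < 1 - p + p * z := by
  rcases hp0.eq_or_lt with rfl | hp
  · norm_num
  · nlinarith [mul_pos hp hz]

lemma div_one_sub_add_mul_le_inv {p z : ℝ} (hp0 : 0 ≤ p) (hp1 : p ≤ 1) (hz : 0 < z) :
    p / (1 - p + p * z) ≤ 1 / z := by
  rw [div_le_div_iff₀ (one_sub_add_mul_pos hp0 hp1 hz) hz]
  linarith

lemma div_add_div_one_sub_add_mul_sub_one_neg {c p z : ℝ} (hc : c ≤ -1) (hp0 : 0 ≤ p)
    (hp1 : p ≤ 1) (hz : 0 < z) : c / z + p / (1 - p + p * z) - 1 < 0 := by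
  have hc' : c / z ≤ -1 / z := div_le_div_of_nonneg_right hc hz.le
  have hsum : -1 / z + 1 / z = 0 := by ring
  linarith [div_one_sub_add_mul_le_inv hp0 hp1 hz]

lemma one_sub_inv_le_neg_one {γ : ℝ} (hγ0 : 0 < γ) (hγ : γ ≤ 1 / 2) : 1 - 1 / γ ≤ -1 := by
  have : 2 ≤ 1 / γ := by rw [le_div_iff₀ hγ0]; linarith
  linarith

lemma hasDerivAt_rpow_mul_affine_mul_exp_neg {e a b z : ℝ} (hz : z ≠ 0) (hD : a + b * z ≠ 0) :
    HasDerivAt (fun x => x ^ e * (a + b * x) * exp (-x))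
      (z ^ e * (a + b * z) * exp (-z) * (e / z + b / (a + b * z) - 1)) z := by
  have hpow : HasDerivAt (fun x => x ^ e) (e * z ^ (e - 1)) z :=
    hasDerivAt_rpow_const (Or.inl hz)
  have haff : HasDerivAt (fun x => a + b * x) b z := by
    simpa using ((hasDerivAt_id z).const_mul b).const_add a
  have hexp : HasDerivAt (fun x => exp (-x)) (-exp (-z)) z := by
    simpa using (hasDerivAt_neg z).exp
  refine ((hpow.mul haff).mul hexp).congr_deriv ?_
  rw [rpow_sub_one hz]
  simp only [Pi.mul_apply]
  linear_combination (-(z ^ e * exp (-z))) * mul_div_cancel₀ b hD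

lemma strictAntiOn_Ioi_of_hasDerivAt_neg {f f' : ℝ → ℝ} {a : ℝ}
    (hf : ∀ x ∈ Ioi a, HasDerivAt f (f' x) x) (hf' : ∀ x ∈ Ioi a, f' x < 0) :
    StrictAntiOn f (Ioi a) :=
  strictAntiOn_of_hasDerivWithinAt_neg (convex_Ioi a)
    (fun x hx => (hf x hx).continuousAt.continuousWithinAt)
    (by simpa only [interior_Ioi] using fun x hx => (hf x hx).hasDerivWithinAt)
    (by simpa only [interior_Ioi] using hf')

lemma strictAntiOn_mul_rpow_mul_affine_mul_exp_neg {C e a b : ℝ} (hC : 0 < C)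
    (hD : ∀ z > 0, 0 < a + b * z) (hlog : ∀ z > 0, e / z + b / (a + b * z) - 1 < 0) :
    StrictAntiOn (fun x => C * x ^ e * (a + b * x) * exp (-x)) (Ioi 0) := by
  refine strictAntiOn_Ioi_of_hasDerivAt_neg
    (f' := fun z => C * (z ^ e * (a + b * z) * exp (-z) * (e / z + b / (a + b * z) - 1)))
    (fun z hz => ?_) (fun z hz => ?_)
  · simpa only [mul_assoc] using
      (hasDerivAt_rpow_mul_affine_mul_exp_neg (ne_of_gt hz) (hD z hz).ne').const_mul C
  · have hz : 0 < z := hz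
    have hDz := hD z hz
    exact mul_neg_of_pos_of_neg hC (mul_neg_of_pos_of_neg (by positivity) (hlog z hz))

theorem rtgle_pdf_decreasing (α γ p : ℝ) (hα : 0 < α) (hγ0 : 0 < γ)
    (hγ : γ < 1 / 2) (hp0 : 0 ≤ p) (hp1 : p ≤ 1) :
    (∀ z > 0, (1 - 1 / γ) / z + p / (1 - p + p * z) - 1 < 0) ∧
    StrictAntiOn
      (fun z => γ * z ^ ((γ - 1) / γ) * α * (1 - p + p * z) * Real.exp (-z))
      (Set.Ioi 0) := by
  have hlog : ∀ z > 0, (1 - 1 / γ) / z + p / (1 - p + p * z) - 1 < 0 := fun z hz =>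
    div_add_div_one_sub_add_mul_sub_one_neg (one_sub_inv_le_neg_one hγ0 hγ.le) hp0 hp1 hz
  have he : (γ - 1) / γ = 1 - 1 / γ := by field_simp
  refine ⟨hlog, ?_⟩
  convert strictAntiOn_mul_rpow_mul_affine_mul_exp_neg (mul_pos hγ0 hα)
    (fun z hz => one_sub_add_mul_pos hp0 hp1 hz) hlog using 1
  funext z
  rw [he]
  ring
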